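/- Let λ > 0 and a ∈ ℝ, and on the hyperbolic upper half-plane H define β(z) := −λ/((z̄ − a)(λ + |z − a|²)) and Φ(z) := i·(z̄ − a)·((z − a)² + λ)/((z − a)·(λ + |z − a|²)). Then (β, Φ) satisfies the hyperbolic vortex equations (V1) and (V2) on H, and the Higgs field Φ vanishes at exactly one point of H, namely z = a + i√λ, where it has a simple zero. -/
import Mathlib


open Complex ComplexConjugate

noncomputable section

/-- Wirtinger derivative ∂_z f = (1/2)(∂_t f − i ∂_r f). -/
def wdz (f : ℂ → ℂ) (z : ℂ) : ℂ :=
  (2:ℂ)⁻¹ * (fderiv ℝ f z 1 - Complex.I * fderiv ℝ f z Complex.I)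

/-- Wirtinger derivative ∂_z̄ f = (1/2)(∂_t f + i ∂_r f). -/
def wdzbar (f : ℂ → ℂ) (z : ℂ) : ℂ :=
  (2:ℂ)⁻¹ * (fderiv ℝ f z 1 + Complex.I * fderiv ℝ f z Complex.I)

/-- A real-valued function regarded as complex-valued. -/
def cre (φ : ℂ → ℝ) : ℂ → ℂ := fun z => (φ z : ℂ)

/-- ∂_z log φ := (∂_z φ)/φ for positive real φ. -/
def dzlog (φ : ℂ → ℝ) (z : ℂ) : ℂ := wdz (cre φ) z / (φ z : ℂ)

/-- ∂_z̄ log φ := (∂_z̄ φ)/φ for positive real φ. -/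
def dzbarlog (φ : ℂ → ℝ) (z : ℂ) : ℂ := wdzbar (cre φ) z / (φ z : ℂ)

/-- Flat Laplacian ∂_t² + ∂_r² on ℂ ≅ ℝ², where z = t + ir. -/
def lap2 (φ : ℂ → ℝ) (z : ℂ) : ℝ :=
  fderiv ℝ (fun w => fderiv ℝ φ w 1) z 1 +
  fderiv ℝ (fun w => fderiv ℝ φ w Complex.I) z Complex.I

/-- The upper half-plane. -/
def H : Set ℂ := {z : ℂ | 0 < z.im}

/-- The connection coefficient β = ∂_z̄ log φ + 1/(z − z̄) of the vortex ansatz. -/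
def betaOf (φ : ℂ → ℝ) (z : ℂ) : ℂ := dzbarlog φ z + 1 / (z - conj z)

/-- The Higgs field Φ = i(z − z̄)·∂_z log φ of the vortex ansatz. -/
def higgsOf (φ : ℂ → ℝ) (z : ℂ) : ℂ := Complex.I * (z - conj z) * dzlog φ z

/-- The connection coefficient of the basic hyperbolic vortex of scale √λ centered at a ∈ ℝ. -/
def beta9 (lam a : ℝ) (z : ℂ) : ℂ :=
  -(lam : ℂ) / ((conj z - (a : ℂ)) * ((lam : ℂ) + (Complex.normSq (z - (a : ℂ)) : ℂ)))

/-- The Higgs field of the basic hyperbolic vortex of scale √λ centered at a ∈ ℝ. -/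
def higgs9 (lam a : ℝ) (z : ℂ) : ℂ :=
  Complex.I * (conj z - (a : ℂ)) * ((z - (a : ℂ))^2 + (lam : ℂ)) /
    ((z - (a : ℂ)) * ((lam : ℂ) + (Complex.normSq (z - (a : ℂ)) : ℂ)))

def wlin (A B : ℂ) : ℂ →L[ℝ] ℂ :=
  A • (ContinuousLinearMap.id ℝ ℂ) + B • (Complex.conjCLE.toContinuousLinearMap)

lemma wlin_apply (A B v : ℂ) : wlin A B v = A * v + B * conj v := by
  simp [wlin, smul_eq_mul]

def HasWD (f : ℂ → ℂ) (z A B : ℂ) : Prop := HasFDerivAt f (wlin A B) z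

lemma hasWD_id (z : ℂ) : HasWD (fun w => w) z 1 0 := by
  have h : wlin 1 0 = ContinuousLinearMap.id ℝ ℂ := by
    ext v; simp [wlin_apply]
  unfold HasWD; rw [h]; exact hasFDerivAt_id z

lemma hasWD_conj (z : ℂ) : HasWD (fun w => conj w) z 0 1 := by
  have h : wlin 0 1 = Complex.conjCLE.toContinuousLinearMap := by
    ext v; simp [wlin_apply]
  unfold HasWD; rw [h]
  exact Complex.conjCLE.hasFDerivAt

lemma hasWD_const (c z : ℂ) : HasWD (fun _ => c) z 0 0 := by
  have h : wlin 0 0 = 0 := by ext v; simp [wlin_apply]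
  unfold HasWD; rw [h]; exact hasFDerivAt_const c z

lemma HasWD.add {f g : ℂ → ℂ} {z A B A' B' : ℂ} (hf : HasWD f z A B) (hg : HasWD g z A' B') :
    HasWD (fun w => f w + g w) z (A + A') (B + B') := by
  have h : wlin (A + A') (B + B') = wlin A B + wlin A' B' := by
    ext v; simp [wlin_apply]; ring
  unfold HasWD at *; rw [h]; exact hf.add hg

lemma HasWD.sub {f g : ℂ → ℂ} {z A B A' B' : ℂ} (hf : HasWD f z A B) (hg : HasWD g z A' B') :
    HasWD (fun w => f w - g w) z (A - A') (B - B') := by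
  have h : wlin (A - A') (B - B') = wlin A B - wlin A' B' := by
    ext v; simp [wlin_apply]; ring
  unfold HasWD at *; rw [h]; exact hf.sub hg

lemma HasWD.mul {f g : ℂ → ℂ} {z A B A' B' : ℂ} (hf : HasWD f z A B) (hg : HasWD g z A' B') :
    HasWD (fun w => f w * g w) z (A * g z + f z * A') (B * g z + f z * B') := by
  have h : wlin (A * g z + f z * A') (B * g z + f z * B')
      = f z • wlin A' B' + g z • wlin A B := by
    ext v; simp [wlin_apply, smul_eq_mul]; ring
  unfold HasWD at *; rw [h]; exact HasFDerivAt.mul hf hg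

lemma HasWD.inv {f : ℂ → ℂ} {z A B : ℂ} (hf : HasWD f z A B) (hz : f z ≠ 0) :
    HasWD (fun w => (f w)⁻¹) z (-(A / (f z)^2)) (-(B / (f z)^2)) := by
  have key := (hasFDerivAt_inv' (𝕜 := ℝ) hz).comp z hf
  have h : wlin (-(A / (f z)^2)) (-(B / (f z)^2))
      = (-ContinuousLinearMap.mulLeftRight ℝ ℂ (f z)⁻¹ (f z)⁻¹).comp (wlin A B) := by
    ext v
    simp [wlin_apply, ContinuousLinearMap.mulLeftRight_apply]
    field_simp
    ring
  unfold HasWD at *; rw [h]; exact key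

lemma HasWD.congr_AB {f : ℂ → ℂ} {z A B A' B' : ℂ} (h : HasWD f z A B)
    (hA : A = A') (hB : B = B') : HasWD f z A' B' := hA ▸ hB ▸ h

lemma HasWD.congr_fun {f g : ℂ → ℂ} {z A B : ℂ} (h : HasWD f z A B)
    (hfg : f = g) : HasWD g z A B := hfg ▸ h

lemma HasWD.wdz_eq {f : ℂ → ℂ} {z A B : ℂ} (h : HasWD f z A B) : wdz f z = A := by
  rw [wdz, HasFDerivAt.fderiv h]
  simp [wlin_apply, Complex.conj_I]
  ring_nf
  simp [Complex.I_sq]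
  ring

lemma HasWD.wdzbar_eq {f : ℂ → ℂ} {z A B : ℂ} (h : HasWD f z A B) : wdzbar f z = B := by
  rw [wdzbar, HasFDerivAt.fderiv h]
  simp [wlin_apply, Complex.conj_I]
  ring_nf
  simp [Complex.I_sq]
  ring

lemma normSq_cast (a : ℝ) (w : ℂ) :
    ((Complex.normSq (w - (a:ℂ)) : ℝ) : ℂ) = (w - a) * (conj w - a) := by
  rw [← Complex.mul_conj]
  simp [map_sub, Complex.conj_ofReal]

lemma hasWD_sub_const (a : ℝ) (z : ℂ) : HasWD (fun w => w - (a:ℂ)) z 1 0 := by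
  simpa using (hasWD_id z).sub (hasWD_const (a:ℂ) z)

lemma hasWD_conj_sub_const (a : ℝ) (z : ℂ) : HasWD (fun w => conj w - (a:ℂ)) z 0 1 := by
  simpa using (hasWD_conj z).sub (hasWD_const (a:ℂ) z)

lemma hasWD_higgs (lam a : ℝ) (z : ℂ) (hu : z - (a:ℂ) ≠ 0)
    (hs : (lam:ℂ) + (z - a)*(conj z - a) ≠ 0) :
    HasWD (higgs9 lam a) z
      ((2*Complex.I*(conj z - a)*(z - a) * ((z-a)*((lam:ℂ) + (z-a)*(conj z - a)))
        - Complex.I*(conj z - a)*((z-a)^2+lam)*((lam:ℂ)+2*(z-a)*(conj z - a)))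
        / ((z-a)*((lam:ℂ) + (z-a)*(conj z - a)))^2)
      ((Complex.I*((z-a)^2+lam)*((z-a)*((lam:ℂ) + (z-a)*(conj z - a)))
        - Complex.I*(conj z - a)*((z-a)^2+lam)*(z-a)^2)
        / ((z-a)*((lam:ℂ) + (z-a)*(conj z - a)))^2) := by
  have h1 := hasWD_sub_const a z
  have h2 := hasWD_conj_sub_const a z
  have h3 : HasWD (fun w => (w - (a:ℂ))^2 + (lam:ℂ)) z (2*(z-a)) 0 := by
    refine (((h1.mul h1).add (hasWD_const (lam:ℂ) z)).congr_fun ?_).congr_AB (by ring) (by ring)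
    funext w; ring
  have h4 := ((hasWD_const Complex.I z).mul h2).mul h3
  have h5 : HasWD (fun w => (w - (a:ℂ)) * ((lam:ℂ) + (w - a)*(conj w - a))) z
      ((lam:ℂ) + 2*(z-a)*(conj z - a)) ((z-a)^2) := by
    refine ((h1.mul ((hasWD_const (lam:ℂ) z).add (h1.mul h2))).congr_AB ?_ ?_)
    · ring
    · ring
  have hd : (fun w => (w - (a:ℂ)) * ((lam:ℂ) + (w - a)*(conj w - a))) z ≠ 0 :=
    mul_ne_zero hu hs
  have h6 := h5.inv hd
  have h7 := h4.mul h6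
  refine (h7.congr_fun ?_).congr_AB ?_ ?_
  · funext w
    rw [higgs9, div_eq_mul_inv, normSq_cast]
  · have hd2 : (z - (a:ℂ)) * ((lam:ℂ) + (z - a)*(conj z - a)) ≠ 0 := mul_ne_zero hu hs
    field_simp
    ring
  · have hd2 : (z - (a:ℂ)) * ((lam:ℂ) + (z - a)*(conj z - a)) ≠ 0 := mul_ne_zero hu hs
    field_simp
    ring

lemma hasWD_beta (lam a : ℝ) (z : ℂ) (hv : conj z - (a:ℂ) ≠ 0)
    (hs : (lam:ℂ) + (z - a)*(conj z - a) ≠ 0) :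
    HasWD (beta9 lam a) z
      ((lam:ℂ)*(conj z - a)^2 / ((conj z - a)*((lam:ℂ) + (z-a)*(conj z - a)))^2)
      ((lam:ℂ)*((lam:ℂ)+2*(z-a)*(conj z - a)) / ((conj z - a)*((lam:ℂ) + (z-a)*(conj z - a)))^2) := by
  have h1 := hasWD_sub_const a z
  have h2 := hasWD_conj_sub_const a z
  have h5 : HasWD (fun w => (conj w - (a:ℂ)) * ((lam:ℂ) + (w - a)*(conj w - a))) z
      ((conj z - a)^2) ((lam:ℂ) + 2*(z-a)*(conj z - a)) := by
    refine ((h2.mul ((hasWD_const (lam:ℂ) z).add (h1.mul h2))).congr_AB ?_ ?_) <;> ring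
  have hd : (fun w => (conj w - (a:ℂ)) * ((lam:ℂ) + (w - a)*(conj w - a))) z ≠ 0 :=
    mul_ne_zero hv hs
  have h6 := h5.inv hd
  have h7 := (hasWD_const (-(lam:ℂ)) z).mul h6
  refine (h7.congr_fun ?_).congr_AB ?_ ?_
  · funext w
    rw [beta9, div_eq_mul_inv, normSq_cast]
  · have hd2 : (conj z - (a:ℂ)) * ((lam:ℂ) + (z - a)*(conj z - a)) ≠ 0 := mul_ne_zero hv hs
    field_simp
    try ring
  · have hd2 : (conj z - (a:ℂ)) * ((lam:ℂ) + (z - a)*(conj z - a)) ≠ 0 := mul_ne_zero hv hs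
    field_simp
    try ring

lemma higgs9_eq (lam a : ℝ) (z : ℂ) : higgs9 lam a z
    = Complex.I * (conj z - a) * ((z-a)^2+lam) / ((z-a)*((lam:ℂ)+(z-a)*(conj z - a))) := by
  rw [higgs9, normSq_cast]

lemma beta9_eq (lam a : ℝ) (z : ℂ) : beta9 lam a z
    = -(lam:ℂ) / ((conj z - a)*((lam:ℂ)+(z-a)*(conj z - a))) := by
  rw [beta9, normSq_cast]


/-- The pair (β, Φ) with β = −λ/((z̄−a)(λ+|z−a|²)) and
Φ = i(z̄−a)((z−a)²+λ)/((z−a)(λ+|z−a|²)) satisfies the hyperbolic vortex equations on the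
upper half-plane, and its Higgs field vanishes exactly at z = a + i√λ, where the zero is
simple. -/
theorem basic_vortex (lam a : ℝ) (hlam : 0 < lam) :
    (∀ z ∈ H,
      wdzbar (higgs9 lam a) z + beta9 lam a z * higgs9 lam a z = 0 ∧
      4 * z.im^2 * (wdz (beta9 lam a) z).re = 1 - Complex.normSq (higgs9 lam a z)) ∧
    ((a : ℂ) + Complex.I * (Real.sqrt lam : ℂ) ∈ H) ∧
    higgs9 lam a ((a : ℂ) + Complex.I * (Real.sqrt lam : ℂ)) = 0 ∧
    (∀ z ∈ H, higgs9 lam a z = 0 → z = (a : ℂ) + Complex.I * (Real.sqrt lam : ℂ)) ∧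
    wdz (higgs9 lam a) ((a : ℂ) + Complex.I * (Real.sqrt lam : ℂ)) ≠ 0 := by
  have sq_sqrt : (Real.sqrt lam : ℂ)^2 = (lam : ℂ) := by
    rw [sq, ← Complex.ofReal_mul, Real.mul_self_sqrt hlam.le]
  have sqrt_pos : 0 < Real.sqrt lam := Real.sqrt_pos.mpr hlam
  have haux : ∀ z : ℂ, z.im ≠ 0 →
      z - (a:ℂ) ≠ 0 ∧ conj z - (a:ℂ) ≠ 0 ∧ (lam:ℂ) + (z - a)*(conj z - a) ≠ 0 := by
    intro z hzim
    have hsR : 0 < lam + Complex.normSq (z - (a:ℂ)) := by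
      have := Complex.normSq_nonneg (z - (a:ℂ)); linarith
    refine ⟨?_, ?_, ?_⟩
    · intro h
      have := congrArg Complex.im h
      simp at this
      exact hzim this
    · intro h
      have := congrArg Complex.im h
      simp at this
      exact hzim this
    · rw [← normSq_cast]
      exact_mod_cast (Complex.ofReal_ne_zero.mpr hsR.ne')
  have him0 : ((a:ℂ) + Complex.I * (Real.sqrt lam : ℂ)).im = Real.sqrt lam := by simp
  obtain ⟨hu0, hv0, hs0⟩ := haux ((a:ℂ) + Complex.I * (Real.sqrt lam : ℂ))
    (by rw [him0]; exact sqrt_pos.ne')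
  have hzero : ((a:ℂ) + Complex.I * (Real.sqrt lam : ℂ) - a)^2 + (lam:ℂ) = 0 := by
    linear_combination (Real.sqrt lam:ℂ)^2 * Complex.I_sq - sq_sqrt
  refine ⟨?_, ?_, ?_, ?_, ?_⟩
  · intro z hz
    have hzim : 0 < z.im := hz
    obtain ⟨hu, hv, hs⟩ := haux z hzim.ne'
    constructor
    · rw [(hasWD_higgs lam a z hu hs).wdzbar_eq, higgs9_eq, beta9_eq]
      field_simp
      ring
    · rw [(hasWD_beta lam a z hv hs).wdz_eq]
      have hsR : 0 < lam + Complex.normSq (z - (a:ℂ)) := by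
        have := Complex.normSq_nonneg (z - (a:ℂ)); linarith
      have hre : (lam:ℂ)*(conj z - a)^2 / ((conj z - a)*((lam:ℂ)+(z-a)*(conj z - a)))^2
          = ((lam / (lam + Complex.normSq (z - (a:ℂ)))^2 : ℝ) : ℂ) := by
        push_cast
        rw [normSq_cast]
        field_simp
      rw [hre, Complex.ofReal_re]
      have hcz : conj z - (a:ℂ) = conj (z - (a:ℂ)) := by
        simp [map_sub, Complex.conj_ofReal]
      have hcast : (lam:ℂ) + ((Complex.normSq (z-(a:ℂ)) : ℝ):ℂ)
          = (((lam + Complex.normSq (z-(a:ℂ))) : ℝ) : ℂ) := by push_cast; ring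
      rw [higgs9]
      rw [Complex.normSq_div, Complex.normSq_mul, Complex.normSq_mul, Complex.normSq_I,
        hcz, Complex.normSq_conj, hcast, Complex.normSq_mul, Complex.normSq_ofReal]
      have him : (z - (a:ℂ)).im = z.im := by simp
      have hnq : Complex.normSq (z - (a:ℂ)) = (z-(a:ℂ)).re^2 + z.im^2 := by
        rw [Complex.normSq_apply, him]; ring
      have h2 : Complex.normSq ((z - (a:ℂ))^2 + (lam:ℂ))
          = ((z-(a:ℂ)).re^2 - z.im^2 + lam)^2 + (2*(z-(a:ℂ)).re*z.im)^2 := by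
        rw [Complex.normSq_apply]
        simp [pow_two, Complex.add_re, Complex.add_im, Complex.mul_re, Complex.mul_im, him]
        ring
      rw [hnq, h2]
      have hd1 : 0 < lam + ((z-(a:ℂ)).re^2 + z.im^2) := by positivity
      have hd2 : 0 < (z-(a:ℂ)).re^2 + z.im^2 := by positivity
      field_simp
      ring
  · show 0 < ((a:ℂ) + Complex.I * (Real.sqrt lam : ℂ)).im
    rw [him0]; exact sqrt_pos
  · rw [higgs9_eq, hzero]
    simp
  · intro z hz h0
    have hzim : 0 < z.im := hz
    obtain ⟨hu, hv, hs⟩ := haux z hzim.ne'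
    rw [higgs9_eq, div_eq_zero_iff] at h0
    rcases h0 with h0 | h0
    · have hnum : (z-(a:ℂ))^2 + lam = 0 := by
        rcases mul_eq_zero.mp h0 with h | h
        · rcases mul_eq_zero.mp h with h | h
          · exact absurd h Complex.I_ne_zero
          · exact absurd h hv
        · exact h
      have hfac : (z - (a:ℂ) - Complex.I*(Real.sqrt lam:ℂ))
          * (z - (a:ℂ) + Complex.I*(Real.sqrt lam:ℂ)) = 0 := by
        linear_combination hnum - (Real.sqrt lam:ℂ)^2 * Complex.I_sq + sq_sqrt
      rcases mul_eq_zero.mp hfac with h | h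
      · linear_combination h
      · exfalso
        have := congrArg Complex.im h
        simp at this
        linarith
    · exact absurd h0 (mul_ne_zero hu hs)
  · rw [(hasWD_higgs lam a ((a:ℂ) + Complex.I * (Real.sqrt lam : ℂ)) hu0 hs0).wdz_eq]
    refine div_ne_zero ?_ (pow_ne_zero 2 (mul_ne_zero hu0 hs0))
    have key : 2*Complex.I*(conj ((a:ℂ) + Complex.I * (Real.sqrt lam : ℂ)) - a)
          *(((a:ℂ) + Complex.I * (Real.sqrt lam : ℂ)) - a)
          * ((((a:ℂ) + Complex.I * (Real.sqrt lam : ℂ))-a)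
            *((lam:ℂ) + (((a:ℂ) + Complex.I * (Real.sqrt lam : ℂ))-a)
              *(conj ((a:ℂ) + Complex.I * (Real.sqrt lam : ℂ)) - a)))
        - Complex.I*(conj ((a:ℂ) + Complex.I * (Real.sqrt lam : ℂ)) - a)
          *((((a:ℂ) + Complex.I * (Real.sqrt lam : ℂ))-a)^2+lam)
          *((lam:ℂ)+2*(((a:ℂ) + Complex.I * (Real.sqrt lam : ℂ))-a)
            *(conj ((a:ℂ) + Complex.I * (Real.sqrt lam : ℂ)) - a))
        = 2*Complex.I*(conj ((a:ℂ) + Complex.I * (Real.sqrt lam : ℂ)) - a)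
          *(((a:ℂ) + Complex.I * (Real.sqrt lam : ℂ)) - a)
          * ((((a:ℂ) + Complex.I * (Real.sqrt lam : ℂ))-a)
            *((lam:ℂ) + (((a:ℂ) + Complex.I * (Real.sqrt lam : ℂ))-a)
              *(conj ((a:ℂ) + Complex.I * (Real.sqrt lam : ℂ)) - a))) := by
      linear_combination (-(Complex.I*(conj ((a:ℂ) + Complex.I * (Real.sqrt lam : ℂ)) - a))
        *((lam:ℂ)+2*(((a:ℂ) + Complex.I * (Real.sqrt lam : ℂ))-a)
          *(conj ((a:ℂ) + Complex.I * (Real.sqrt lam : ℂ)) - a))) * hzero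
    rw [key]
    exact mul_ne_zero (mul_ne_zero (mul_ne_zero (by norm_num) hv0) hu0)
      (mul_ne_zero hu0 hs0)
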